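/- arXiv:1410.0068 — 3 statements merged into one kernel-verified Lean document; each statement's English description precedes it below -/
import Mathlib

section
/- Assume V''(0) = 2, fix an integer m ≥ 0 and Ω = (r₋, r₊) with r₋ < 0 < r₊. Suppose for each small h > 0 that u(·,h) : [r₋, r₊] → ℝ has the form u(x,h) = (h^{−m/2} a(x,h) + δ(x,h)) e^{−φ(x)/h}, where: (i) a(x,h) = Σ_{0≤2j≤m} h^j a_j(x) + R(x,h) with sup_{[r₋,r₊]} |R(·,h)| = O(h^{⌊m/2⌋+1}) and sup_{[r₋,r₊]} |a(·,h) − a₀| = O(h); (ii) Σ_{0≤2j≤m} h^j a_j(x) = 2^{−m} h^{m/2} H_m(h^{−1/2}x) + Σ_{0≤2j≤m} h^j x^{m−2j+1} b_j(x) with b_j continuous on [r₋, r₊]; (iii) a₀(x) = x^m A₀(x) with A₀ continuous and strictly positive on [r₋, r₊]; (iv) sup_{[r₋,r₊]} |δ(·,h)| = O(h^N) for every N. Then there exist M > 0 and h₁ > 0 such that for all 0 < h < h₁ and all x ∈ (r₋, r₊) with |x| ≥ M h^{1/2}, one has u(x,h) ≠ 0. -/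
/-!
Since `exp (-φ / h) ≠ 0`, it suffices that `|a(x,h)| ≥ c h^{m/2}` on `|x| ≥ M √h`, because
`h^{m/2} |δ| = O(h^{m/2+1})`. For `|x| ≥ ε` this follows from `a = a₀ + O(h)` and
`|a₀(x)| = |x|ᵐ A₀(x) ≥ εᵐ min A₀`. For `|x| ≤ ε` one uses (ii) in the variable `y = x / √h`:
`H_m` has leading term `(2y)ᵐ`, so for `|y| ≥ M` the Hermite term `2⁻ᵐ h^{m/2} H_m(y)` is at
least `|x|ᵐ / 2`; since `h ≤ x²` the `bⱼ`-terms are `O(|x|^{m+1}) ≤ |x|ᵐ / 4`, and the remainder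
in (i) is `O(h^{(m+1)/2})`, negligible against `h^{m/2} ≤ |x|ᵐ`.
-/

open MeasureTheory Set Filter

/-- The physicists' Hermite polynomial `H_m(y) = (−1)^m e^{y²}(d/dy)^m e^{−y²}`. -/
noncomputable def physHermiteFn (m : ℕ) (y : ℝ) : ℝ :=
  (-1 : ℝ) ^ m * Real.exp (y ^ 2) * iteratedDeriv m (fun t : ℝ => Real.exp (-t ^ 2)) y

open Polynomial Topology

lemma physHermiteFn_eq_aeval_hermite (m : ℕ) (y : ℝ) :
    physHermiteFn m y = √2 ^ m * aeval (√2 * y) (hermite m) := by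
  have hsq : ∀ t : ℝ, (√2 * t) ^ 2 / 2 = t ^ 2 := fun t => by
    rw [mul_pow, Real.sq_sqrt zero_le_two]; ring
  have hgauss : (fun t : ℝ => Real.exp (-t ^ 2)) =
      fun t => (fun s : ℝ => Real.exp (-(s ^ 2 / 2))) (√2 * t) := by
    simp only [hsq]
  rw [physHermiteFn, hgauss, iteratedDeriv_comp_const_mul (n := m)
      (f := fun s : ℝ => Real.exp (-(s ^ 2 / 2))) (by fun_prop) √2,
    iteratedDeriv_eq_iterate]
  beta_reduce
  rw [deriv_gaussian_eq_hermite_mul_gaussian, hsq]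
  have hexp : Real.exp (y ^ 2) * Real.exp (-y ^ 2) = 1 := by rw [← Real.exp_add]; simp
  calc _ = ((-1) ^ m * (-1) ^ m) * (Real.exp (y ^ 2) * Real.exp (-y ^ 2)) *
        (√2 ^ m * aeval (√2 * y) (hermite m)) := by ring
    _ = _ := by rw [hexp, ← mul_pow]; simp

lemma Polynomial.eventually_abs_eval_ge_atTop (P : ℝ[X]) :
    ∀ᶠ y in atTop, |P.leadingCoeff| / 2 * |y| ^ P.natDegree ≤ |P.eval y| := by
  filter_upwards [P.isEquivalent_atTop_lead.isLittleO.bound (by norm_num : (0 : ℝ) < 1 / 2)]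
    with y hy
  rw [Pi.sub_apply, Real.norm_eq_abs, Real.norm_eq_abs, abs_mul, abs_pow] at hy
  have := abs_sub_abs_le_abs_sub (P.leadingCoeff * y ^ P.natDegree) (P.eval y)
  rw [abs_sub_comm, abs_mul, abs_pow] at this
  linarith

lemma Polynomial.exists_abs_eval_ge (P : ℝ[X]) :
    ∃ R, ∀ y, R ≤ |y| → |P.leadingCoeff| / 2 * |y| ^ P.natDegree ≤ |P.eval y| := by
  have hneg : ∀ᶠ y in atTop, |P.leadingCoeff| / 2 * |y| ^ P.natDegree ≤ |P.eval (-y)| := by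
    simpa [natDegree_comp, leadingCoeff_comp, abs_mul] using
      (P.comp (-X)).eventually_abs_eval_ge_atTop
  obtain ⟨R₁, hR₁⟩ := eventually_atTop.1 P.eventually_abs_eval_ge_atTop
  obtain ⟨R₂, hR₂⟩ := eventually_atTop.1 hneg
  refine ⟨max R₁ R₂, fun y hy => ?_⟩
  rcases le_total 0 y with hy0 | hy0
  · rw [abs_of_nonneg hy0] at hy
    exact hR₁ y (le_of_max_le_left hy)
  · rw [abs_of_nonpos hy0] at hy
    simpa using hR₂ (-y) (le_of_max_le_right hy)

lemma exists_abs_physHermiteFn_scaled_ge (m : ℕ) :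
    ∃ R, ∀ t x : ℝ, 0 < t → R * t ≤ |x| →
      |x| ^ m / 2 ≤ |(2 ^ m)⁻¹ * t ^ m * physHermiteFn m (t⁻¹ * x)| := by
  obtain ⟨R, hR⟩ := ((hermite m).map (algebraMap ℤ ℝ)).exists_abs_eval_ge
  rw [((hermite_monic m).map _).leadingCoeff, (hermite_monic m).natDegree_map, natDegree_hermite,
    abs_one] at hR
  refine ⟨R / √2, fun t x ht hx => ?_⟩
  have hs2 : (0 : ℝ) < √2 := by positivity
  have hy : R ≤ |√2 * (t⁻¹ * x)| := by
    rw [abs_mul, abs_mul, abs_of_pos hs2, abs_inv, abs_of_pos ht, ← div_le_iff₀' hs2,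
      ← div_eq_inv_mul, le_div_iff₀ ht]
    exact hx
  have hgrowth := hR _ hy
  rw [eval_map_algebraMap] at hgrowth
  have hscale : (2 ^ m)⁻¹ * t ^ m * √2 ^ m = (t / √2) ^ m := by
    rw [div_pow, eq_div_iff (by positivity), mul_assoc, mul_assoc, ← mul_pow,
      Real.mul_self_sqrt zero_le_two]
    field_simp
  rw [physHermiteFn_eq_aeval_hermite, ← mul_assoc, hscale, abs_mul,
    abs_of_pos (show 0 < (t / √2) ^ m by positivity)]
  calc |x| ^ m / 2 = (t / √2) ^ m * (1 / 2 * |√2 * (t⁻¹ * x)| ^ m) := by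
        have hcancel : t / √2 * (√2 * (t⁻¹ * |x|)) = |x| := by field_simp
        rw [abs_mul, abs_mul, abs_of_pos hs2, abs_inv, abs_of_pos ht, mul_left_comm, ← mul_pow,
          hcancel]
        ring
    _ ≤ _ := mul_le_mul_of_nonneg_left hgrowth (by positivity)

lemma abs_sum_pow_mul_pow_mul_le {m : ℕ} {h x : ℝ} (b : ℕ → ℝ) (hh : 0 ≤ h)
    (hhx : h ≤ x ^ 2) :
    |∑ j ∈ Finset.range (m / 2 + 1), h ^ j * x ^ (m - 2 * j + 1) * b j| ≤
      |x| ^ (m + 1) * ∑ j ∈ Finset.range (m / 2 + 1), |b j| := by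
  rw [Finset.mul_sum]
  refine (Finset.abs_sum_le_sum_abs _ _).trans (Finset.sum_le_sum fun j hj => ?_)
  have hjm : 2 * j ≤ m := by have := Finset.mem_range.1 hj; omega
  rw [abs_mul, abs_mul, abs_pow, abs_pow, abs_of_nonneg hh]
  gcongr
  calc h ^ j * |x| ^ (m - 2 * j + 1) ≤ (|x| ^ 2) ^ j * |x| ^ (m - 2 * j + 1) := by
        rw [sq_abs]; gcongr
    _ = |x| ^ (m + 1) := by rw [← pow_mul, ← pow_add]; congr 1; omega

lemma sqrt_pow_div_eight_le_abs_of_near {m : ℕ} {h x P A B C : ℝ} (b : ℕ → ℝ) (hh : 0 < h)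
    (hh1 : h ≤ 1) (hx : √h ≤ |x|) (hP : |x| ^ m / 2 ≤ |P|)
    (hb : ∑ j ∈ Finset.range (m / 2 + 1), |b j| ≤ B) (hBx : B * |x| ≤ 1 / 4)
    (hA : |A - (P + ∑ j ∈ Finset.range (m / 2 + 1), h ^ j * x ^ (m - 2 * j + 1) * b j)| ≤
      C * h ^ (m / 2 + 1))
    (hC : 0 ≤ C) (hCh : C * √h ≤ 1 / 8) : √h ^ m / 8 ≤ |A| := by
  set T := ∑ j ∈ Finset.range (m / 2 + 1), h ^ j * x ^ (m - 2 * j + 1) * b j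
  set t := √h
  have ht : 0 < t := Real.sqrt_pos.2 hh
  have ht1 : t ≤ 1 := Real.sqrt_le_one.2 hh1
  have hsq : h ≤ x ^ 2 := by
    rw [← Real.sq_sqrt hh.le, ← sq_abs x]; gcongr
  have hT : |T| ≤ |x| ^ m / 4 := calc
    |T| ≤ |x| ^ (m + 1) * ∑ j ∈ Finset.range (m / 2 + 1), |b j| :=
        abs_sum_pow_mul_pow_mul_le b hh.le hsq
    _ ≤ |x| ^ m * (B * |x|) := by rw [pow_succ, mul_comm B, ← mul_assoc]; gcongr
    _ ≤ |x| ^ m / 4 := by nlinarith [pow_nonneg (abs_nonneg x) m]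
  have hS : |x| ^ m / 4 ≤ |P + T| := by
    have := abs_sub_abs_le_abs_sub P (-T)
    rw [sub_neg_eq_add, abs_neg] at this
    linarith
  have hrem : C * h ^ (m / 2 + 1) ≤ t ^ m / 8 := calc
    C * h ^ (m / 2 + 1) ≤ C * t ^ (m + 1) := by
      rw [← Real.sq_sqrt hh.le, ← pow_mul]
      exact mul_le_mul_of_nonneg_left (pow_le_pow_of_le_one ht.le ht1 (by omega)) hC
    _ = t ^ m * (C * t) := by ring
    _ ≤ t ^ m / 8 := by nlinarith [pow_pos ht m]
  have htm : t ^ m ≤ |x| ^ m := by gcongr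
  have := abs_sub_abs_le_abs_sub (P + T) A
  rw [abs_sub_comm] at this
  linarith

theorem exists_eventually_le_abs_amplitude {s : Set ℝ} {m : ℕ} {a : ℝ → ℝ → ℝ}
    {aj bj : ℕ → ℝ → ℝ} {A0 : ℝ → ℝ} {C B α : ℝ} (hC : 0 ≤ C) (hα : 0 < α)
    (ha : ∀ᶠ h in 𝓝[>] 0, ∀ x ∈ s,
      |a h x - ∑ j ∈ Finset.range (m / 2 + 1), h ^ j * aj j x| ≤ C * h ^ (m / 2 + 1) ∧
      |a h x - aj 0 x| ≤ C * h)
    (hHerm : ∀ᶠ h in 𝓝[>] 0, ∀ x ∈ s,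
      ∑ j ∈ Finset.range (m / 2 + 1), h ^ j * aj j x =
        ((2 : ℝ) ^ m)⁻¹ * h ^ ((m : ℝ) / 2) * physHermiteFn m (h ^ (-(1 : ℝ) / 2) * x) +
          ∑ j ∈ Finset.range (m / 2 + 1), h ^ j * x ^ (m - 2 * j + 1) * bj j x)
    (hB : ∀ x ∈ s, ∑ j ∈ Finset.range (m / 2 + 1), |bj j x| ≤ B)
    (hA0 : ∀ x ∈ s, α ≤ A0 x) (ha0 : ∀ x ∈ s, aj 0 x = x ^ m * A0 x) :
    ∃ M c : ℝ, 0 < M ∧ 0 < c ∧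
      ∀ᶠ h in 𝓝[>] 0, ∀ x ∈ s, M * √h ≤ |x| → c * √h ^ m ≤ |a h x| := by
  obtain ⟨R, hR⟩ := exists_abs_physHermiteFn_scaled_ge m
  -- for `|x| ≤ ε` the `bⱼ`-terms are at most a quarter of the Hermite term
  set ε : ℝ := (4 * |B| + 1)⁻¹
  have hε : 0 < ε := by positivity
  have hBε : |B| * ε ≤ 1 / 4 := by
    rw [← div_eq_mul_inv, div_le_iff₀ (by positivity)]
    linarith
  set c : ℝ := min (1 / 8) (ε ^ m * α / 2)
  have hc : 0 < c := by positivity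
  refine ⟨max R 1, c, by positivity, hc, ?_⟩
  have hid : Tendsto (fun h : ℝ => h) (𝓝[>] 0) (𝓝 0) := nhdsWithin_le_nhds
  have hsqrt : Tendsto (fun h : ℝ => √h) (𝓝[>] 0) (𝓝 0) := by
    simpa using (Real.continuous_sqrt.tendsto 0).mono_left nhdsWithin_le_nhds
  filter_upwards [ha, hHerm, self_mem_nhdsWithin, hid.eventually_lt_const one_pos,
    (hsqrt.const_mul C).eventually_lt_const (show C * 0 < 1 / 8 by norm_num),
    (hid.const_mul C).eventually_lt_const (show C * 0 < ε ^ m * α / 2 by simp; positivity)]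
    with h hah hHh hh0 hh1 hCt hCh x hx hxM
  obtain ⟨hS, ha₀⟩ := hah x hx
  set t := √h
  have ht : 0 < t := Real.sqrt_pos.2 hh0
  have ht1 : t ≤ 1 := Real.sqrt_le_one.2 hh1.le
  have htx : t ≤ |x| := (le_mul_of_one_le_left ht.le (le_max_right _ _)).trans hxM
  rcases le_or_gt |x| ε with hxε | hxε
  · have hP := hR t x ht ((mul_le_mul_of_nonneg_right (le_max_left R 1) ht.le).trans hxM)
    have hBx : |B| * |x| ≤ 1 / 4 := (mul_le_mul_of_nonneg_left hxε (abs_nonneg B)).trans hBε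
    rw [hHh x hx, Real.rpow_div_two_eq_sqrt _ hh0.le, Real.rpow_div_two_eq_sqrt _ hh0.le,
      Real.rpow_natCast, Real.rpow_neg_one] at hS
    calc c * t ^ m ≤ t ^ m / 8 := by
          rw [div_eq_mul_one_div, mul_comm]; gcongr; exact min_le_left _ _
      _ ≤ |a h x| := sqrt_pow_div_eight_le_abs_of_near (fun j => bj j x) hh0 hh1.le htx hP
          ((hB x hx).trans (le_abs_self B)) hBx hS hC hCt.le
  · have ha0x : ε ^ m * α ≤ |aj 0 x| := by
      rw [ha0 x hx, abs_mul, abs_pow, abs_of_pos (hα.trans_le (hA0 x hx))]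
      gcongr
      exact hA0 x hx
    have := abs_sub_abs_le_abs_sub (aj 0 x) (a h x)
    rw [abs_sub_comm] at this
    calc c * t ^ m ≤ c := mul_le_of_le_one_right hc.le (pow_le_one₀ ht.le ht1)
      _ ≤ ε ^ m * α / 2 := min_le_right _ _
      _ ≤ |a h x| := by linarith

lemma eventually_nhdsGT_of_forall_lt {p : ℝ → Prop} {a b : ℝ} (hab : a < b)
    (hp : ∀ x, a < x → x < b → p x) : ∀ᶠ x in 𝓝[>] a, p x :=
  mem_of_superset (Ioo_mem_nhdsGT hab) fun x hx => hp x hx.1 hx.2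

lemma rpow_neg_natCast_div_two_mul_add_ne_zero {m : ℕ} {h a δ c : ℝ} (hh : 0 < h)
    (ha : c * √h ^ m ≤ |a|) (hδ : |δ| < c) : h ^ (-(m : ℝ) / 2) * a + δ ≠ 0 := by
  rw [Real.rpow_div_two_eq_sqrt _ hh.le, Real.rpow_neg (Real.sqrt_nonneg h),
    Real.rpow_natCast]
  intro hsum
  have hpos : 0 < √h ^ m := by positivity
  have hδa : |a| = √h ^ m * |δ| := by
    rw [← abs_of_pos hpos, ← abs_mul, ← neg_eq_of_add_eq_zero_right hsum, mul_neg,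
      mul_inv_cancel_left₀ hpos.ne', abs_neg]
  nlinarith

theorem WKB_positivity_general
    (m : ℕ) (rm rp : ℝ)
    -- the phase function φ
    (φ : ℝ → ℝ)
    -- structure of u(·,h), valid for small h
    (h₁ : ℝ) (hh₁ : 0 < h₁)
    (u a δ' : ℝ → ℝ → ℝ) (aj bj : ℕ → ℝ → ℝ) (A0 : ℝ → ℝ)
    (hu : ∀ h : ℝ, 0 < h → h < h₁ → ∀ x ∈ Set.Icc rm rp,
      u h x = (h ^ (-(m : ℝ) / 2) * a h x + δ' h x) * Real.exp (-φ x / h))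
    -- (i) asymptotics of a(·,h)
    (ha : ∃ C h₀ : ℝ, 0 < C ∧ 0 < h₀ ∧ ∀ h : ℝ, 0 < h → h < h₀ → ∀ x ∈ Set.Icc rm rp,
      |a h x - ∑ j ∈ Finset.range (m / 2 + 1), h ^ j * aj j x| ≤ C * h ^ (m / 2 + 1) ∧
      |a h x - aj 0 x| ≤ C * h)
    -- (ii) Hermite polynomial structure of the first terms
    (hbj : ∀ j : ℕ, 2 * j ≤ m → ContinuousOn (bj j) (Set.Icc rm rp))
    (hHerm : ∀ h : ℝ, 0 < h → h < h₁ → ∀ x ∈ Set.Icc rm rp,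
      ∑ j ∈ Finset.range (m / 2 + 1), h ^ j * aj j x =
        ((2 : ℝ) ^ m)⁻¹ * h ^ ((m : ℝ) / 2) * physHermiteFn m (h ^ (-(1 : ℝ) / 2) * x) +
          ∑ j ∈ Finset.range (m / 2 + 1), h ^ j * x ^ (m - 2 * j + 1) * bj j x)
    -- (iii) a₀(x) = x^m A₀(x) with A₀ continuous and strictly positive
    (hA0 : ContinuousOn A0 (Set.Icc rm rp))
    (hA0pos : ∀ x ∈ Set.Icc rm rp, 0 < A0 x)
    (ha0 : ∀ x ∈ Set.Icc rm rp, aj 0 x = x ^ m * A0 x)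
    -- (iv) δ(·,h) = O(h^N) for every N
    (hδ : ∀ N : ℕ, ∃ C h₀ : ℝ, 0 < C ∧ 0 < h₀ ∧ ∀ h : ℝ, 0 < h → h < h₀ →
      ∀ x ∈ Set.Icc rm rp, |δ' h x| ≤ C * h ^ N) :
    ∃ M h₂ : ℝ, 0 < M ∧ 0 < h₂ ∧ ∀ h : ℝ, 0 < h → h < h₂ →
      ∀ x ∈ Set.Ioo rm rp, M * Real.sqrt h ≤ |x| → u h x ≠ 0 := by
  obtain ⟨C, h₀, hC, hh₀, ha⟩ := ha
  obtain ⟨Cδ, hδ₀, -, hhδ₀, hδ⟩ := hδ 1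
  obtain ⟨B, hB⟩ := isCompact_Icc.exists_bound_of_continuousOn (continuousOn_finsetSum
    (Finset.range (m / 2 + 1)) fun j hj => (hbj j (by have := Finset.mem_range.1 hj; omega)).abs)
  obtain ⟨α, hα, hαA0⟩ := isCompact_Icc.exists_forall_le' hA0 hA0pos
  obtain ⟨M, c, hM, hc, hlow⟩ := exists_eventually_le_abs_amplitude hC.le hα
    (eventually_nhdsGT_of_forall_lt hh₀ ha) (eventually_nhdsGT_of_forall_lt hh₁ hHerm)
    (fun x hx => (le_abs_self _).trans (hB x hx)) hαA0 ha0
  have hδc : ∀ᶠ h in 𝓝[>] 0, Cδ * h ^ 1 < c := by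
    refine Tendsto.eventually_lt_const (show Cδ * 0 ^ 1 < c by simpa using hc) ?_
    exact ((continuous_const.mul (continuous_pow 1)).tendsto 0).mono_left nhdsWithin_le_nhds
  obtain ⟨h₂, hh₂, hsmall⟩ := (nhdsGT_basis 0).eventually_iff.1
    (hlow.and (hδc.and ((eventually_nhdsGT_of_forall_lt hh₁ hu).and
      (eventually_nhdsGT_of_forall_lt hhδ₀ hδ))))
  refine ⟨M, h₂, hM, hh₂, fun h hh hhh₂ x hx hxM => ?_⟩
  obtain ⟨hah, hδh, huh, hδx⟩ := hsmall ⟨hh, hhh₂⟩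
  rw [huh x (Ioo_subset_Icc_self hx)]
  exact mul_ne_zero (rpow_neg_natCast_div_two_mul_add_ne_zero hh
    (hah x (Ioo_subset_Icc_self hx) hxM) ((hδx x (Ioo_subset_Icc_self hx)).trans_lt hδh))
    (Real.exp_ne_zero _)

theorem WKB_positivity
    (V : ℝ → ℝ)
    (hV : ContDiff ℝ (⊤ : ℕ∞) V)
    (hV0 : V 0 = 0) (hV0' : deriv V 0 = 0)
    (hV2 : iteratedDeriv 2 V 0 = 2)
    (hVpos : ∀ x : ℝ, x ≠ 0 → 0 < V x)
    (hVinf : 0 < Filter.liminf V (Filter.atBot ⊔ Filter.atTop))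
    (m : ℕ) (rm rp : ℝ) (hrm : rm < 0) (hrp : 0 < rp)
    -- the phase function φ
    (φ : ℝ → ℝ)
    (hφ : ∀ x : ℝ, φ x = Real.sign x * ∫ t in (0:ℝ)..x, Real.sqrt (V t))
    -- structure of u(·,h), valid for small h
    (h₁ : ℝ) (hh₁ : 0 < h₁)
    (u a δ' : ℝ → ℝ → ℝ) (aj bj : ℕ → ℝ → ℝ) (A0 : ℝ → ℝ)
    (hu : ∀ h : ℝ, 0 < h → h < h₁ → ∀ x ∈ Set.Icc rm rp,
      u h x = (h ^ (-(m : ℝ) / 2) * a h x + δ' h x) * Real.exp (-φ x / h))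
    -- (i) asymptotics of a(·,h)
    (ha : ∃ C h₀ : ℝ, 0 < C ∧ 0 < h₀ ∧ ∀ h : ℝ, 0 < h → h < h₀ → ∀ x ∈ Set.Icc rm rp,
      |a h x - ∑ j ∈ Finset.range (m / 2 + 1), h ^ j * aj j x| ≤ C * h ^ (m / 2 + 1) ∧
      |a h x - aj 0 x| ≤ C * h)
    -- (ii) Hermite polynomial structure of the first terms
    (hbj : ∀ j : ℕ, 2 * j ≤ m → ContinuousOn (bj j) (Set.Icc rm rp))
    (hHerm : ∀ h : ℝ, 0 < h → h < h₁ → ∀ x ∈ Set.Icc rm rp,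
      ∑ j ∈ Finset.range (m / 2 + 1), h ^ j * aj j x =
        ((2 : ℝ) ^ m)⁻¹ * h ^ ((m : ℝ) / 2) * physHermiteFn m (h ^ (-(1 : ℝ) / 2) * x) +
          ∑ j ∈ Finset.range (m / 2 + 1), h ^ j * x ^ (m - 2 * j + 1) * bj j x)
    -- (iii) a₀(x) = x^m A₀(x) with A₀ continuous and strictly positive
    (hA0 : ContinuousOn A0 (Set.Icc rm rp))
    (hA0pos : ∀ x ∈ Set.Icc rm rp, 0 < A0 x)
    (ha0 : ∀ x ∈ Set.Icc rm rp, aj 0 x = x ^ m * A0 x)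
    -- (iv) δ(·,h) = O(h^N) for every N
    (hδ : ∀ N : ℕ, ∃ C h₀ : ℝ, 0 < C ∧ 0 < h₀ ∧ ∀ h : ℝ, 0 < h → h < h₀ →
      ∀ x ∈ Set.Icc rm rp, |δ' h x| ≤ C * h ^ N) :
    ∃ M h₂ : ℝ, 0 < M ∧ 0 < h₂ ∧ ∀ h : ℝ, 0 < h → h < h₂ →
      ∀ x ∈ Set.Ioo rm rp, M * Real.sqrt h ≤ |x| → u h x ≠ 0 :=
  WKB_positivity_general m rm rp φ h₁ hh₁ u a δ' aj bj A0 hu ha hbj hHerm hA0 hA0pos ha0 hδ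
end

section
/- Let ν > 0, h > 0, 0 < L' < ∞, let W : [0, L'] → ℝ be continuous, and let Φ ∈ C²([0, L']). Let u(x) = x^{1/2+ν} y(x) with y ∈ C²([0, L']) real-valued and u(L') = 0, and set (Qu)(x) = −h²u''(x) + h²(ν²−1/4)x⁻²u(x) + W(x)u(x). Then all integrals below converge absolutely and ∫₀^{L'} [ h²·((e^{Φ(x)/h}u(x))')² + h²(ν²−1/4)x⁻²·(e^{Φ(x)/h}u(x))² + (W(x) − Φ'(x)²)·(e^{Φ(x)/h}u(x))² ] dx = ∫₀^{L'} e^{2Φ(x)/h}·(Qu)(x)·u(x) dx. -/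
/-!
With `v = e^{Φ/h} u`, expanding `h² (v')²` shows that the energy density minus `e^{2Φ/h} (Qu) u`
is the derivative of the flux `h² e^{2Φ/h} u' u`, so the identity is the fundamental theorem of
calculus on `(0, L')` once the flux vanishes at both ends. For `u = x^a y` with `y ∈ C²` and
`a = 1/2 + ν > 1/2`, both integrands are `x^{2a-2}` times a function continuous on `[0, L']`,
integrable since `2a - 2 > -1`, and the flux is `x^{2a-1}` times such a function, which vanishes
at `0` since `2a - 1 > 0` and at `L'` since `y L' = 0`.
-/

open MeasureTheory Set Filter Topology Real

/-- The operator `Q(ν;h)` of the paper, with `c = ν² - 1/4`. -/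
noncomputable def radialOperator (h c : ℝ) (W u : ℝ → ℝ) (x : ℝ) : ℝ :=
  -(h ^ 2) * deriv (deriv u) x + h ^ 2 * c * (x ^ 2)⁻¹ * u x + W x * u x

noncomputable def agmonEnergyDensity (h c : ℝ) (W Φ u : ℝ → ℝ) (x : ℝ) : ℝ :=
  h ^ 2 * deriv (fun t => exp (Φ t / h) * u t) x ^ 2 +
    h ^ 2 * c * (x ^ 2)⁻¹ * (exp (Φ x / h) * u x) ^ 2 +
    (W x - deriv Φ x ^ 2) * (exp (Φ x / h) * u x) ^ 2

noncomputable def agmonFlux (h : ℝ) (Φ u : ℝ → ℝ) (x : ℝ) : ℝ :=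
  h ^ 2 * exp (2 * Φ x / h) * deriv u x * u x

section AgmonIdentity

variable {h c x : ℝ} {W Φ u : ℝ → ℝ}

lemma exp_two_mul_div (t h : ℝ) : exp (2 * t / h) = exp (t / h) ^ 2 := by
  rw [← exp_nat_mul]; ring_nf

theorem hasDerivAt_agmonFlux (hh : h ≠ 0) (hΦ : DifferentiableAt ℝ Φ x)
    (hu : DifferentiableAt ℝ u x) (hu' : DifferentiableAt ℝ (deriv u) x) :
    HasDerivAt (agmonFlux h Φ u)
      (agmonEnergyDensity h c W Φ u x - exp (2 * Φ x / h) * radialOperator h c W u x * u x) x := by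
  have hv : HasDerivAt (fun t => exp (Φ t / h) * u t) _ x :=
    (hΦ.hasDerivAt.div_const h).exp.mul hu.hasDerivAt
  have hw := ((hΦ.hasDerivAt.const_mul 2).div_const h).exp
  refine (((hw.const_mul (h ^ 2)).mul hu'.hasDerivAt).mul hu.hasDerivAt).congr_deriv ?_
  rw [agmonEnergyDensity, radialOperator, hv.deriv, Pi.mul_apply, exp_two_mul_div]
  field_simp
  ring

theorem integral_agmonEnergyDensity_eq {a b : ℝ} (hab : a < b) (hh : h ≠ 0)
    (hΦ : ∀ x ∈ Ioo a b, DifferentiableAt ℝ Φ x) (hu : ∀ x ∈ Ioo a b, DifferentiableAt ℝ u x)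
    (hu' : ∀ x ∈ Ioo a b, DifferentiableAt ℝ (deriv u) x)
    (hE : IntegrableOn (agmonEnergyDensity h c W Φ u) (Ioo a b))
    (hQ : IntegrableOn (fun x => exp (2 * Φ x / h) * radialOperator h c W u x * u x) (Ioo a b))
    (ha : Tendsto (agmonFlux h Φ u) (𝓝[>] a) (𝓝 0))
    (hb : Tendsto (agmonFlux h Φ u) (𝓝[<] b) (𝓝 0)) :
    ∫ x in Ioo a b, agmonEnergyDensity h c W Φ u x =
      ∫ x in Ioo a b, exp (2 * Φ x / h) * radialOperator h c W u x * u x := by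
  have hFTC := intervalIntegral.integral_eq_sub_of_hasDerivAt_of_tendsto hab
    (fun x hx => hasDerivAt_agmonFlux hh (hΦ x hx) (hu x hx) (hu' x hx))
    ((intervalIntegrable_iff_integrableOn_Ioo_of_le hab.le).2 (hE.sub hQ)) ha hb
  rw [intervalIntegral.integral_of_le hab.le, integral_Ioc_eq_integral_Ioo,
    integral_sub hE hQ, sub_self, sub_eq_zero] at hFTC
  exact hFTC

end AgmonIdentity

lemma integrableOn_Ioo_rpow_mul {L r : ℝ} {g : ℝ → ℝ} (hr : -1 < r)
    (hg : ContinuousOn g (Icc 0 L)) : IntegrableOn (fun x => x ^ r * g x) (Ioo 0 L) :=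
  ((intervalIntegral.intervalIntegrable_rpow' hr).1.mono_set
    Ioo_subset_Ioc_self).mul_continuousOn_of_subset hg measurableSet_Ioo isCompact_Icc
    Ioo_subset_Icc_self

lemma ContDiffOn.hasDerivAt_derivWithin_Icc {f : ℝ → ℝ} {n : WithTop ℕ∞} {a b x : ℝ}
    (hf : ContDiffOn ℝ n f (Icc a b)) (hn : n ≠ 0) (hx : x ∈ Ioo a b) :
    HasDerivAt f (derivWithin f (Icc a b) x) x :=
  (hf.differentiableOn hn x (Ioo_subset_Icc_self hx)).hasDerivWithinAt.hasDerivAt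
    (Icc_mem_nhds hx.1 hx.2)

lemma ContinuousOn.tendsto_nhdsGT_of_eqOn {f g : ℝ → ℝ} {a b : ℝ} (hab : a < b)
    (hg : ContinuousOn g (Icc a b)) (hfg : EqOn f g (Ioo a b)) : Tendsto f (𝓝[>] a) (𝓝 (g a)) := by
  rw [← nhdsWithin_Ioo_eq_nhdsGT hab]
  exact ((hg a (left_mem_Icc.2 hab.le)).mono Ioo_subset_Icc_self).tendsto.congr'
    (eventuallyEq_nhdsWithin_of_eqOn hfg).symm

lemma ContinuousOn.tendsto_nhdsLT_of_eqOn {f g : ℝ → ℝ} {a b : ℝ} (hab : a < b)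
    (hg : ContinuousOn g (Icc a b)) (hfg : EqOn f g (Ioo a b)) : Tendsto f (𝓝[<] b) (𝓝 (g b)) := by
  rw [← nhdsWithin_Ioo_eq_nhdsLT hab]
  exact ((hg b (right_mem_Icc.2 hab.le)).mono Ioo_subset_Icc_self).tendsto.congr'
    (eventuallyEq_nhdsWithin_of_eqOn hfg).symm

section RpowMul

variable {a x : ℝ} {y y₁ : ℝ → ℝ}

lemma hasDerivAt_rpow_mul {y' : ℝ} (hx : 0 < x) (hy : HasDerivAt y y' x) :
    HasDerivAt (fun t => t ^ a * y t) (x ^ (a - 1) * (a * y x + x * y')) x :=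
  ((hasDerivAt_rpow_const (Or.inl hx.ne')).mul hy).congr_deriv (by
    rw [rpow_sub_one hx.ne']; field_simp)

lemma hasDerivAt_deriv_rpow_mul {y₂ : ℝ} (hx : 0 < x) (hy : ∀ᶠ t in 𝓝 x, HasDerivAt y (y₁ t) t)
    (hy₁ : HasDerivAt y₁ y₂ x) :
    HasDerivAt (deriv fun t => t ^ a * y t)
      (x ^ (a - 2) * ((a - 1) * (a * y x + x * y₁ x) + x * ((a + 1) * y₁ x + x * y₂))) x := by
  have hp : HasDerivAt (fun t => a * y t + t * y₁ t) ((a + 1) * y₁ x + x * y₂) x :=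
    ((hy.self_of_nhds.const_mul a).add ((hasDerivAt_id' x).mul hy₁)).congr_deriv (by ring)
  refine ((hasDerivAt_rpow_mul (a := a - 1) hx hp).congr_deriv ?_).congr_of_eventuallyEq ?_
  · rw [sub_sub, one_add_one_eq_two]
  · filter_upwards [hy, lt_mem_nhds hx] with t ht ht₀
    exact (hasDerivAt_rpow_mul ht₀ ht).deriv

end RpowMul

section FrobeniusSolution

variable {a c h L : ℝ} {W Φ y : ℝ → ℝ}

lemma integrableOn_agmonEnergyDensity_rpow_mul (hL : 0 < L) (ha : 1 / 2 < a)
    (hW : ContinuousOn W (Icc 0 L)) (hΦ : ContDiffOn ℝ 1 Φ (Icc 0 L))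
    (hy : ContDiffOn ℝ 1 y (Icc 0 L)) :
    IntegrableOn (agmonEnergyDensity h c W Φ fun t => t ^ a * y t) (Ioo 0 L) := by
  set φ := derivWithin Φ (Icc 0 L)
  set y₁ := derivWithin y (Icc 0 L)
  have hφ : ContinuousOn φ (Icc 0 L) := hΦ.continuousOn_derivWithin (uniqueDiffOn_Icc hL) le_rfl
  have hy₁ : ContinuousOn y₁ (Icc 0 L) := hy.continuousOn_derivWithin (uniqueDiffOn_Icc hL) le_rfl
  have hΦc := hΦ.continuousOn
  have hyc := hy.continuousOn
  refine (integrableOn_Ioo_rpow_mul (r := (a - 1) * 2) (by linarith)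
    (g := fun x => exp (Φ x / h) ^ 2 * (h ^ 2 * (φ x / h * (x * y x) + (a * y x + x * y₁ x)) ^ 2 +
      h ^ 2 * c * y x ^ 2 + (W x - φ x ^ 2) * (x * y x) ^ 2)) (by fun_prop)).congr_fun
    (fun x hx => ?_) measurableSet_Ioo
  have hΦx : HasDerivAt Φ (φ x) x := hΦ.hasDerivAt_derivWithin_Icc one_ne_zero hx
  have hyx : HasDerivAt y (y₁ x) x := hy.hasDerivAt_derivWithin_Icc one_ne_zero hx
  have hv : HasDerivAt (fun t => exp (Φ t / h) * (t ^ a * y t)) _ x :=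
    (hΦx.div_const h).exp.mul (hasDerivAt_rpow_mul hx.1 hyx)
  have hx₀ : x ≠ 0 := hx.1.ne'
  have hsq : x ^ ((a - 1) * 2) = (x ^ (a - 1)) ^ 2 := by
    exact_mod_cast rpow_mul_natCast hx.1.le (a - 1) 2
  have hpow : x ^ a = x ^ (a - 1) * x := by rw [← rpow_add_one hx₀, sub_add_cancel]
  dsimp only
  rw [agmonEnergyDensity, hv.deriv, hΦx.deriv, hsq, hpow]
  field_simp

lemma ContDiffOn.hasDerivAt_deriv_rpow_mul_of_mem_Ioo (hL : 0 < L)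
    (hy : ContDiffOn ℝ 2 y (Icc 0 L)) {x : ℝ} (hx : x ∈ Ioo 0 L) :
    HasDerivAt (deriv fun t => t ^ a * y t)
      (x ^ (a - 2) * ((a - 1) * (a * y x + x * derivWithin y (Icc 0 L) x) +
        x * ((a + 1) * derivWithin y (Icc 0 L) x +
          x * derivWithin (derivWithin y (Icc 0 L)) (Icc 0 L) x))) x :=
  hasDerivAt_deriv_rpow_mul hx.1
    (eventually_of_mem (Ioo_mem_nhds hx.1 hx.2) fun _ ht =>
      hy.hasDerivAt_derivWithin_Icc two_ne_zero ht)
    ((hy.derivWithin (m := 1) (uniqueDiffOn_Icc hL) le_rfl).hasDerivAt_derivWithin_Icc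
      one_ne_zero hx)

lemma integrableOn_exp_mul_radialOperator_mul_rpow_mul (hL : 0 < L) (ha : 1 / 2 < a)
    (hW : ContinuousOn W (Icc 0 L)) (hΦ : ContinuousOn Φ (Icc 0 L))
    (hy : ContDiffOn ℝ 2 y (Icc 0 L)) :
    IntegrableOn (fun x => exp (2 * Φ x / h) * radialOperator h c W (fun t => t ^ a * y t) x *
      (x ^ a * y x)) (Ioo 0 L) := by
  set y₁ := derivWithin y (Icc 0 L)
  set y₂ := derivWithin y₁ (Icc 0 L)
  have hy₁ : ContDiffOn ℝ 1 y₁ (Icc 0 L) := hy.derivWithin (uniqueDiffOn_Icc hL) le_rfl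
  have hy₁c := hy₁.continuousOn
  have hy₂ : ContinuousOn y₂ (Icc 0 L) := hy₁.continuousOn_derivWithin (uniqueDiffOn_Icc hL) le_rfl
  have hyc := hy.continuousOn
  refine (integrableOn_Ioo_rpow_mul (r := (a - 1) * 2) (by linarith)
    (g := fun x => exp (2 * Φ x / h) * (-(h ^ 2) * ((a - 1) * (a * y x + x * y₁ x) +
      x * ((a + 1) * y₁ x + x * y₂ x)) + h ^ 2 * c * y x + W x * x ^ 2 * y x) * y x)
    (by fun_prop)).congr_fun (fun x hx => ?_) measurableSet_Ioo
  have hx₀ : x ≠ 0 := hx.1.ne'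
  have hsq : x ^ ((a - 1) * 2) = (x ^ (a - 1)) ^ 2 := by
    exact_mod_cast rpow_mul_natCast hx.1.le (a - 1) 2
  have hpow : x ^ a = x ^ (a - 1) * x := by rw [← rpow_add_one hx₀, sub_add_cancel]
  have hpow₂ : x ^ (a - 2) = x ^ (a - 1) / x := by
    rw [← rpow_sub_one hx₀, sub_sub, one_add_one_eq_two]
  dsimp only
  rw [radialOperator, (hy.hasDerivAt_deriv_rpow_mul_of_mem_Ioo hL hx).deriv, hsq, hpow₂, hpow]
  field_simp
  ring

lemma tendsto_agmonFlux_rpow_mul (hL : 0 < L) (ha : 1 / 2 < a) (hΦ : ContinuousOn Φ (Icc 0 L))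
    (hy : ContDiffOn ℝ 1 y (Icc 0 L)) (hyL : y L = 0) :
    Tendsto (agmonFlux h Φ fun t => t ^ a * y t) (𝓝[>] 0) (𝓝 0) ∧
      Tendsto (agmonFlux h Φ fun t => t ^ a * y t) (𝓝[<] L) (𝓝 0) := by
  set y₁ := derivWithin y (Icc 0 L)
  have hy₁ : ContinuousOn y₁ (Icc 0 L) := hy.continuousOn_derivWithin (uniqueDiffOn_Icc hL) le_rfl
  have hyc := hy.continuousOn
  set G := fun x => x ^ (2 * a - 1) * (h ^ 2 * exp (2 * Φ x / h) * (a * y x + x * y₁ x) * y x)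
  have hG : ContinuousOn G (Icc 0 L) :=
    (continuous_rpow_const (by linarith)).continuousOn.mul (by fun_prop)
  have hFG : EqOn (agmonFlux h Φ fun t => t ^ a * y t) G (Ioo 0 L) := fun x hx => by
    have hyx : HasDerivAt y (y₁ x) x := hy.hasDerivAt_derivWithin_Icc one_ne_zero hx
    have hx₀ : x ≠ 0 := hx.1.ne'
    have hpow : x ^ a = x ^ (a - 1) * x := by rw [← rpow_add_one hx₀, sub_add_cancel]
    have hpow' : x ^ (2 * a - 1) = x ^ (a - 1) * x ^ (a - 1) * x := by
      rw [← rpow_add hx.1, ← rpow_add_one hx₀]; ring_nf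
    rw [agmonFlux, (hasDerivAt_rpow_mul hx.1 hyx).deriv, hpow]
    simp only [G, hpow']
    ring
  have hG₀ : G 0 = 0 := by simp [G, zero_rpow (by linarith : 2 * a - 1 ≠ 0)]
  have hGL : G L = 0 := by simp [G, hyL]
  exact ⟨by simpa only [hG₀] using hG.tendsto_nhdsGT_of_eqOn hL hFG,
    by simpa only [hGL] using hG.tendsto_nhdsLT_of_eqOn hL hFG⟩

theorem agmon_identity_rpow_mul (hL : 0 < L) (ha : 1 / 2 < a) (hh : h ≠ 0)
    (hW : ContinuousOn W (Icc 0 L)) (hΦ : ContDiffOn ℝ 1 Φ (Icc 0 L))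
    (hy : ContDiffOn ℝ 2 y (Icc 0 L)) (hyL : y L = 0) :
    IntegrableOn (agmonEnergyDensity h c W Φ fun t => t ^ a * y t) (Ioo 0 L) ∧
      IntegrableOn (fun x => exp (2 * Φ x / h) * radialOperator h c W (fun t => t ^ a * y t) x *
        (x ^ a * y x)) (Ioo 0 L) ∧
      ∫ x in Ioo 0 L, agmonEnergyDensity h c W Φ (fun t => t ^ a * y t) x =
        ∫ x in Ioo 0 L, exp (2 * Φ x / h) * radialOperator h c W (fun t => t ^ a * y t) x *
          (x ^ a * y x) := by
  have hy₁ : ContDiffOn ℝ 1 y (Icc 0 L) := hy.of_le one_le_two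
  have hE := integrableOn_agmonEnergyDensity_rpow_mul (h := h) (c := c) hL ha hW hΦ hy₁
  have hQ := integrableOn_exp_mul_radialOperator_mul_rpow_mul (h := h) (c := c) hL ha hW
    hΦ.continuousOn hy
  obtain ⟨h₀, h_L⟩ := tendsto_agmonFlux_rpow_mul (h := h) hL ha hΦ.continuousOn hy₁ hyL
  refine ⟨hE, hQ, integral_agmonEnergyDensity_eq hL hh (fun x hx => ?_) (fun x hx => ?_)
    (fun x hx => ?_) hE hQ h₀ h_L⟩
  · exact (hΦ.hasDerivAt_derivWithin_Icc one_ne_zero hx).differentiableAt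
  · exact (hasDerivAt_rpow_mul hx.1 (hy.hasDerivAt_derivWithin_Icc two_ne_zero hx)).differentiableAt
  · exact (hy.hasDerivAt_deriv_rpow_mul_of_mem_Ioo hL hx).differentiableAt

end FrobeniusSolution

theorem agmon_energy_identity
    (ν h L' : ℝ) (hν : 0 < ν) (hh : 0 < h) (hL' : 0 < L')
    (W : ℝ → ℝ) (hW : ContinuousOn W (Set.Icc 0 L'))
    (Φ : ℝ → ℝ) (hΦ : ContDiffOn ℝ 2 Φ (Set.Icc 0 L'))
    (y : ℝ → ℝ) (hy : ContDiffOn ℝ 2 y (Set.Icc 0 L'))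
    (huL' : L' ^ ((1:ℝ)/2 + ν) * y L' = 0) :
    MeasureTheory.IntegrableOn
      (fun x : ℝ =>
        h ^ 2 * (deriv (fun t : ℝ =>
            Real.exp (Φ t / h) * (t ^ ((1:ℝ)/2 + ν) * y t)) x) ^ 2 +
        h ^ 2 * (ν ^ 2 - 1/4) * (x ^ 2)⁻¹ *
            (Real.exp (Φ x / h) * (x ^ ((1:ℝ)/2 + ν) * y x)) ^ 2 +
        (W x - (deriv Φ x) ^ 2) *
            (Real.exp (Φ x / h) * (x ^ ((1:ℝ)/2 + ν) * y x)) ^ 2)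
      (Set.Ioo 0 L') volume ∧
    MeasureTheory.IntegrableOn
      (fun x : ℝ =>
        Real.exp (2 * Φ x / h) *
          (-(h ^ 2) * deriv (deriv (fun t : ℝ => t ^ ((1:ℝ)/2 + ν) * y t)) x +
            h ^ 2 * (ν ^ 2 - 1/4) * (x ^ 2)⁻¹ * (x ^ ((1:ℝ)/2 + ν) * y x) +
            W x * (x ^ ((1:ℝ)/2 + ν) * y x)) *
          (x ^ ((1:ℝ)/2 + ν) * y x))
      (Set.Ioo 0 L') volume ∧
    (∫ x in Set.Ioo 0 L',
        (h ^ 2 * (deriv (fun t : ℝ =>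
            Real.exp (Φ t / h) * (t ^ ((1:ℝ)/2 + ν) * y t)) x) ^ 2 +
        h ^ 2 * (ν ^ 2 - 1/4) * (x ^ 2)⁻¹ *
            (Real.exp (Φ x / h) * (x ^ ((1:ℝ)/2 + ν) * y x)) ^ 2 +
        (W x - (deriv Φ x) ^ 2) *
            (Real.exp (Φ x / h) * (x ^ ((1:ℝ)/2 + ν) * y x)) ^ 2)) =
      ∫ x in Set.Ioo 0 L',
        Real.exp (2 * Φ x / h) *
          (-(h ^ 2) * deriv (deriv (fun t : ℝ => t ^ ((1:ℝ)/2 + ν) * y t)) x +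
            h ^ 2 * (ν ^ 2 - 1/4) * (x ^ 2)⁻¹ * (x ^ ((1:ℝ)/2 + ν) * y x) +
            W x * (x ^ ((1:ℝ)/2 + ν) * y x)) *
          (x ^ ((1:ℝ)/2 + ν) * y x) := by
  have hyL : y L' = 0 := (mul_eq_zero.1 huL').resolve_left (rpow_pos_of_pos hL' _).ne'
  exact agmon_identity_rpow_mul hL' (by linarith) hh.ne' hW (hΦ.of_le one_le_two) hy hyL
end

section
/- Let ν > 0, h > 0, λ ∈ ℝ, L > 0, and let W : [0, L] → ℝ be continuous. Suppose u(x) = x^{1/2+ν} y(x) and w(x) = x^{1/2+ν} z(x) with y, z ∈ C²([0, L]) satisfy −h²u'' + h²(ν²−1/4)x⁻²u + (W − λ)u = 0 and −h²w'' + h²(ν²−1/4)x⁻²w + (W − λ)w = u on (0, L]. Then (w u' − w' u)(L) = h^{−2} ∫₀^{L} u(t)² dt. -/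
/-!
Write `α = 1/2 + ν`, so `u = x^α y` and `w = x^α z`. On `(0, L]` the Wronskian `w u' - w' u`
equals `(x^α)^2 (z y' - z' y)`, and this expression is continuous on `[0, L]` with value `0` at
`x = 0` because `α > 0`. Its derivative on `(0, L)` is `w u'' - w'' u`; subtracting `u` times the
equation for `w` from `w` times the equation for `u` cancels the singular and potential terms and
leaves `h² (w u'' - w'' u) = u²`. The fundamental theorem of calculus on `[0, L]` concludes.
-/

open MeasureTheory Set Filter Topology

noncomputable def wronskianWithin (s : Set ℝ) (w u : ℝ → ℝ) (x : ℝ) : ℝ :=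
  w x * derivWithin u s x - derivWithin w s x * u x

section

variable {s : Set ℝ} {f g : ℝ → ℝ} {x : ℝ}

theorem ContDiffOn.continuousOn_wronskianWithin (hs : UniqueDiffOn ℝ s)
    (hf : ContDiffOn ℝ 1 f s) (hg : ContDiffOn ℝ 1 g s) :
    ContinuousOn (wronskianWithin s g f) s :=
  (hg.continuousOn.mul (hf.continuousOn_derivWithin hs le_rfl)).sub
    ((hg.continuousOn_derivWithin hs le_rfl).mul hf.continuousOn)

theorem hasDerivAt_wronskianWithin (hs : UniqueDiffOn ℝ s) (hf : ContDiffOn ℝ 2 f s)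
    (hg : ContDiffOn ℝ 2 g s) (hx : s ∈ 𝓝 x) :
    HasDerivAt (wronskianWithin s g f)
      (g x * derivWithin (derivWithin f s) s x - derivWithin (derivWithin g s) s x * f x) x := by
  have hxs : x ∈ s := mem_of_mem_nhds hx
  have hasDerivAt_of {k : ℝ → ℝ} (hk : ContDiffOn ℝ 1 k s) :
      HasDerivAt k (derivWithin k s x) x :=
    ((hk.differentiableOn one_ne_zero x hxs).hasDerivWithinAt).hasDerivAt hx
  have hf' := hasDerivAt_of (hf.derivWithin hs le_rfl)
  have hg' := hasDerivAt_of (hg.derivWithin hs le_rfl)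
  have hW : HasDerivAt (fun t => g t * derivWithin f s t - derivWithin g s t * f t) _ x :=
    ((hasDerivAt_of (hg.of_le one_le_two)).mul hf').sub
      (hg'.mul (hasDerivAt_of (hf.of_le one_le_two)))
  exact hW.congr_deriv (by ring)

variable {α : ℝ}

theorem derivWithin_rpow_mul (hx : 0 < x) (hs : UniqueDiffWithinAt ℝ s x)
    (hf : DifferentiableWithinAt ℝ f s x) :
    derivWithin (fun t => t ^ α * f t) s x =
      α * x ^ (α - 1) * f x + x ^ α * derivWithin f s x :=
  ((Real.hasDerivAt_rpow_const (Or.inl hx.ne')).hasDerivWithinAt.mul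
    hf.hasDerivWithinAt).derivWithin hs

theorem derivWithin_derivWithin_rpow_mul (hs : UniqueDiffOn ℝ s) (hf : ContDiffOn ℝ 2 f s)
    (hxs : x ∈ s) (hx : 0 < x) :
    derivWithin (derivWithin (fun t => t ^ α * f t) s) s x =
      α * (α - 1) * x ^ (α - 2) * f x + 2 * α * x ^ (α - 1) * derivWithin f s x
        + x ^ α * derivWithin (derivWithin f s) s x := by
  have hf1 : ContDiffOn ℝ 1 (derivWithin f s) s := hf.derivWithin hs le_rfl
  have hderiv : derivWithin (fun t => t ^ α * f t) s =ᶠ[𝓝[s] x]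
      fun t => α * t ^ (α - 1) * f t + t ^ α * derivWithin f s t := by
    filter_upwards [inter_mem_nhdsWithin s (Ioi_mem_nhds hx)] with t ⟨hts, ht⟩
    exact derivWithin_rpow_mul ht (hs t hts) (hf.differentiableOn two_ne_zero t hts)
  rw [hderiv.derivWithin_eq (hderiv.eq_of_nhdsWithin hxs)]
  have hpow (β : ℝ) : HasDerivWithinAt (fun t : ℝ => t ^ β) (β * x ^ (β - 1)) s x :=
    (Real.hasDerivAt_rpow_const (Or.inl hx.ne')).hasDerivWithinAt
  have hsum : HasDerivWithinAt
      (fun t => α * t ^ (α - 1) * f t + t ^ α * derivWithin f s t) _ s x :=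
    (((hpow (α - 1)).const_mul α).mul
      (hf.differentiableOn two_ne_zero x hxs).hasDerivWithinAt).add
      ((hpow α).mul (hf1.differentiableOn one_ne_zero x hxs).hasDerivWithinAt)
  rw [hsum.derivWithin (hs x hxs), show α - 1 - 1 = α - 2 by ring]
  ring

theorem wronskianWithin_rpow_mul (hx : 0 < x) (hs : UniqueDiffWithinAt ℝ s x)
    (hf : DifferentiableWithinAt ℝ f s x) (hg : DifferentiableWithinAt ℝ g s x) :
    wronskianWithin s (fun t => t ^ α * g t) (fun t => t ^ α * f t) x =
      (x ^ α) ^ 2 * wronskianWithin s g f x := by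
  simp only [wronskianWithin, derivWithin_rpow_mul hx hs hf, derivWithin_rpow_mul hx hs hg]
  ring

theorem hasDerivAt_rpow_sq_mul_wronskianWithin (hs : UniqueDiffOn ℝ s)
    (hf : ContDiffOn ℝ 2 f s) (hg : ContDiffOn ℝ 2 g s) (hx : s ∈ 𝓝 x) (hx0 : 0 < x) :
    HasDerivAt (fun t => (t ^ α) ^ 2 * wronskianWithin s g f t)
      (x ^ α * g x * derivWithin (derivWithin (fun t => t ^ α * f t) s) s x -
        derivWithin (derivWithin (fun t => t ^ α * g t) s) s x * (x ^ α * f x)) x := by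
  have hxs : x ∈ s := mem_of_mem_nhds hx
  refine (((Real.hasDerivAt_rpow_const (p := α) (Or.inl hx0.ne')).pow 2).mul
    (hasDerivAt_wronskianWithin hs hf hg hx)).congr_deriv ?_
  rw [derivWithin_derivWithin_rpow_mul hs hf hxs hx0,
    derivWithin_derivWithin_rpow_mul hs hg hxs hx0, wronskianWithin, Pi.pow_apply]
  ring

end

theorem radial_wronskian_identity_general
    (ν h lam L : ℝ) (hν : 0 < ν) (hh : 0 < h) (hL : 0 < L)
    (W : ℝ → ℝ)
    (y z : ℝ → ℝ)
    (hy : ContDiffOn ℝ 2 y (Set.Icc 0 L))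
    (hz : ContDiffOn ℝ 2 z (Set.Icc 0 L))
    -- u = x^{1/2+ν} y solves (Q − λ)u = 0 on (0, L]
    (hueq : ∀ x ∈ Set.Ioc 0 L,
      -(h ^ 2) * derivWithin (derivWithin (fun t : ℝ => t ^ ((1:ℝ)/2 + ν) * y t)
          (Set.Icc 0 L)) (Set.Icc 0 L) x
        + h ^ 2 * (ν ^ 2 - 1/4) * (x ^ 2)⁻¹ * (x ^ ((1:ℝ)/2 + ν) * y x)
        + (W x - lam) * (x ^ ((1:ℝ)/2 + ν) * y x) = 0)
    -- w = x^{1/2+ν} z solves (Q − λ)w = u on (0, L]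
    (hweq : ∀ x ∈ Set.Ioc 0 L,
      -(h ^ 2) * derivWithin (derivWithin (fun t : ℝ => t ^ ((1:ℝ)/2 + ν) * z t)
          (Set.Icc 0 L)) (Set.Icc 0 L) x
        + h ^ 2 * (ν ^ 2 - 1/4) * (x ^ 2)⁻¹ * (x ^ ((1:ℝ)/2 + ν) * z x)
        + (W x - lam) * (x ^ ((1:ℝ)/2 + ν) * z x) = x ^ ((1:ℝ)/2 + ν) * y x) :
    (L ^ ((1:ℝ)/2 + ν) * z L) *
        derivWithin (fun t : ℝ => t ^ ((1:ℝ)/2 + ν) * y t) (Set.Icc 0 L) L -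
      derivWithin (fun t : ℝ => t ^ ((1:ℝ)/2 + ν) * z t) (Set.Icc 0 L) L *
        (L ^ ((1:ℝ)/2 + ν) * y L) =
      (h ^ 2)⁻¹ * ∫ t in (0:ℝ)..L, (t ^ ((1:ℝ)/2 + ν) * y t) ^ 2 := by
  set α : ℝ := 1 / 2 + ν
  set S := Icc (0 : ℝ) L
  have hα : 0 < α := by positivity
  have hS : UniqueDiffOn ℝ S := uniqueDiffOn_Icc hL
  set F : ℝ → ℝ := fun t => (t ^ α) ^ 2 * wronskianWithin S z y t
  have hF' : ∀ x ∈ Ioo 0 L, HasDerivAt F ((h ^ 2)⁻¹ * (x ^ α * y x) ^ 2) x := by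
    intro x hx
    refine (hasDerivAt_rpow_sq_mul_wronskianWithin hS hy hz (Icc_mem_nhds hx.1 hx.2)
      hx.1).congr_deriv ?_
    rw [eq_inv_mul_iff_mul_eq₀ (by positivity)]
    linear_combination (x ^ α * y x) * hweq x (Ioo_subset_Ioc_self hx) -
      (x ^ α * z x) * hueq x (Ioo_subset_Ioc_self hx)
  have hFcont : ContinuousOn F S :=
    ((Real.continuous_rpow_const hα.le).continuousOn.pow 2).mul
      ((hy.of_le one_le_two).continuousOn_wronskianWithin hS (hz.of_le one_le_two))
  have hint : IntervalIntegrable (fun x => (h ^ 2)⁻¹ * (x ^ α * y x) ^ 2) volume 0 L := by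
    refine ContinuousOn.intervalIntegrable_of_Icc hL.le ?_
    exact continuousOn_const.mul
      (((Real.continuous_rpow_const hα.le).continuousOn.mul hy.continuousOn).pow 2)
  have hLS : L ∈ S := right_mem_Icc.2 hL.le
  calc _ = F L := wronskianWithin_rpow_mul hL (hS L hLS)
          (hy.differentiableOn two_ne_zero L hLS) (hz.differentiableOn two_ne_zero L hLS)
    _ = F L - F 0 := by simp [F, Real.zero_rpow hα.ne']
    _ = _ := by
      rw [← intervalIntegral.integral_const_mul]
      exact (intervalIntegral.integral_eq_sub_of_hasDerivAt_of_le hL.le hFcont hF' hint).symm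

theorem radial_wronskian_identity
    (ν h lam L : ℝ) (hν : 0 < ν) (hh : 0 < h) (hL : 0 < L)
    (W : ℝ → ℝ) (hW : ContinuousOn W (Set.Icc 0 L))
    (y z : ℝ → ℝ)
    (hy : ContDiffOn ℝ 2 y (Set.Icc 0 L))
    (hz : ContDiffOn ℝ 2 z (Set.Icc 0 L))
    -- u = x^{1/2+ν} y solves (Q − λ)u = 0 on (0, L]
    (hueq : ∀ x ∈ Set.Ioc 0 L,
      -(h ^ 2) * derivWithin (derivWithin (fun t : ℝ => t ^ ((1:ℝ)/2 + ν) * y t)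
          (Set.Icc 0 L)) (Set.Icc 0 L) x
        + h ^ 2 * (ν ^ 2 - 1/4) * (x ^ 2)⁻¹ * (x ^ ((1:ℝ)/2 + ν) * y x)
        + (W x - lam) * (x ^ ((1:ℝ)/2 + ν) * y x) = 0)
    -- w = x^{1/2+ν} z solves (Q − λ)w = u on (0, L]
    (hweq : ∀ x ∈ Set.Ioc 0 L,
      -(h ^ 2) * derivWithin (derivWithin (fun t : ℝ => t ^ ((1:ℝ)/2 + ν) * z t)
          (Set.Icc 0 L)) (Set.Icc 0 L) x
        + h ^ 2 * (ν ^ 2 - 1/4) * (x ^ 2)⁻¹ * (x ^ ((1:ℝ)/2 + ν) * z x)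
        + (W x - lam) * (x ^ ((1:ℝ)/2 + ν) * z x) = x ^ ((1:ℝ)/2 + ν) * y x) :
    (L ^ ((1:ℝ)/2 + ν) * z L) *
        derivWithin (fun t : ℝ => t ^ ((1:ℝ)/2 + ν) * y t) (Set.Icc 0 L) L -
      derivWithin (fun t : ℝ => t ^ ((1:ℝ)/2 + ν) * z t) (Set.Icc 0 L) L *
        (L ^ ((1:ℝ)/2 + ν) * y L) =
      (h ^ 2)⁻¹ * ∫ t in (0:ℝ)..L, (t ^ ((1:ℝ)/2 + ν) * y t) ^ 2 :=
  radial_wronskian_identity_general ν h lam L hν hh hL W y z hy hz hueq hweq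
end
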